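/- Let R be a reduced root system with a choice of positive roots, and A a set of pairwise strongly orthogonal roots satisfying property #: for distinct α₁,α₂ ∈ A and β > 0, s_{α₁}(β) < 0 implies s_{α₂}(β) > 0. Then for any disjoint subsets A₁, A₂ ⊂ A and any β > 0 with S_{A₁}(β) < 0, we have S_{A₂}(β) > 0 and S_{A₁}S_{A₂}(β) < 0, where S_B denotes the product of the reflections s_α for α ∈ B. -/

import Mathlib

open scoped InnerProductSpace

variable {V : Type*} [NormedAddCommGroup V] [InnerProductSpace ℝ V]

/-- The (orthogonal) reflection in the root `α`: `s_α(v) = v - (2⟪v,α⟫/⟪α,α⟫)α`. -/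
noncomputable def sRefl (α v : V) : V := v - (2 * ⟪v, α⟫_ℝ / ⟪α, α⟫_ℝ) • α

/-- The coroot of `α`, identified with a vector via the invariant inner product. -/
noncomputable def coroot (α : V) : V := (2 / ⟪α, α⟫_ℝ) • α

/-- `S_A`: the product of the (commuting) reflections in the pairwise orthogonal
elements of `A`, given by its closed formula. -/
noncomputable def SRefl (A : Finset V) (v : V) : V :=
  v - ∑ α ∈ A, (2 * ⟪v, α⟫_ℝ / ⟪α, α⟫_ℝ) • α

/-- A (reduced) root system in `V`, with the ambient inner product Weyl-invariant. -/
structure IsRootSystem (R : Set V) : Prop where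
  finite : R.Finite
  nonempty : R.Nonempty
  ne_zero : ∀ α ∈ R, α ≠ (0 : V)
  refl_mem : ∀ α ∈ R, ∀ β ∈ R, sRefl α β ∈ R
  integral : ∀ α ∈ R, ∀ β ∈ R, ∃ n : ℤ, 2 * ⟪β, α⟫_ℝ / ⟪α, α⟫_ℝ = (n : ℝ)
  reduced : ∀ α ∈ R, ∀ t : ℝ, t • α ∈ R → t = 1 ∨ t = -1

/-- `α` and `β` are strongly orthogonal: neither their sum nor difference is a root. -/
def StronglyOrthogonal (R : Set V) (α β : V) : Prop := α + β ∉ R ∧ α - β ∉ R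

/-- A strongly orthogonal subset of `R`. -/
def IsSOS (R A : Set V) : Prop := A ⊆ R ∧ A.Pairwise (StronglyOrthogonal R)

/-- A choice of positive roots in `R`. -/
structure IsPositiveSystem (R P : Set V) : Prop where
  subset : P ⊆ R
  mem_or_neg_mem : ∀ α ∈ R, α ∈ P ∨ -α ∈ P
  not_both : ∀ α ∈ P, -α ∉ P
  add_mem : ∀ α ∈ P, ∀ β ∈ P, α + β ∈ R → α + β ∈ P

/-- Property `#(R,>,A)`: for distinct `α₁, α₂ ∈ A` and `β > 0`,
`s_{α₁}(β) < 0` implies `s_{α₂}(β) > 0`. -/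
def PropSharp (P A : Set V) : Prop :=
  ∀ α₁ ∈ A, ∀ α₂ ∈ A, α₁ ≠ α₂ → ∀ β ∈ P, -(sRefl α₁ β) ∈ P → sRefl α₂ β ∈ P

/-- Property `##(R,>,A)`: for disjoint `A₁, A₂ ⊆ A` and `β > 0` with `S_{A₁}(β) < 0`
one has `S_{A₂}(β) > 0` and `S_{A₁}S_{A₂}(β) < 0`. -/
def PropSharpSharp (P : Set V) (A : Finset V) : Prop :=
  ∀ A₁ ⊆ A, ∀ A₂ ⊆ A, Disjoint A₁ A₂ → ∀ β ∈ P, -(SRefl A₁ β) ∈ P →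
    SRefl A₂ β ∈ P ∧ -(SRefl A₁ (SRefl A₂ β)) ∈ P

/-- `R⁺_B = {β : β > 0 ∧ S_B(β) < 0}`. -/
noncomputable def RPlus (P : Set V) (B : Finset V) : Set V :=
  {β | β ∈ P ∧ -(SRefl B β) ∈ P}

/-!
Distinct elements of `A` are orthogonal: strongly orthogonal roots are orthogonal unless they are
proportional, and property `#` rules out `α, -α ∈ A`. So the reflections `s_α`, `α ∈ A`, commute
and `S_B` is their product. Two reflections `s_α, s_α'` that keep `β > 0` positive keep it positive
jointly (otherwise `#` applied to `-s_α s_α' β` is violated), and by induction `S_B β > 0` as soon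
as every `s_α β`, `α ∈ B`, is positive. Conversely if `s_α₀ β < 0` for one `α₀ ∈ B`, then
`δ = -s_α₀ β > 0` has `s_α₀ δ = -β < 0`, so `#` makes every other `s_α δ` positive and
`S_B β = -S_{B \ α₀} δ < 0`. Given `S_{A₁} β < 0` some `α₀ ∈ A₁` has `s_α₀ β < 0`; then `#` makes
all `s_α β`, `α ∈ A₂`, positive, whence `S_{A₂} β > 0`, and `S_{A₁} S_{A₂} = S_{A₁ ∪ A₂}` sends
`β` to a negative root.
-/

lemma real_inner_mul_inner_self_lt {F : Type*} [NormedAddCommGroup F] [InnerProductSpace ℝ F]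
    {x y : F} (hx : x ≠ 0) (hy : ∀ r : ℝ, y ≠ r • x) :
    ⟪x, y⟫_ℝ * ⟪x, y⟫_ℝ < ⟪x, x⟫_ℝ * ⟪y, y⟫_ℝ := by
  refine (real_inner_mul_inner_self_le x y).lt_of_ne fun h => ?_
  have hy0 : y ≠ 0 := by simpa using hy 0
  rw [real_inner_self_eq_norm_mul_norm, real_inner_self_eq_norm_mul_norm] at h
  have habs : |⟪x, y⟫_ℝ| = ‖x‖ * ‖y‖ := by
    rw [← abs_of_nonneg (by positivity : 0 ≤ ‖x‖ * ‖y‖), ← sq_eq_sq_iff_abs_eq_abs]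
    linarith
  obtain ⟨r, -, hr⟩ := (norm_inner_eq_norm_iff (𝕜 := ℝ) hx hy0).mp habs
  exact hy r hr

lemma Int.abs_eq_one_or_abs_eq_one_of_mul_pos_of_mul_lt_four {n m : ℤ} (hpos : 0 < n * m)
    (hlt : n * m < 4) : |n| = 1 ∨ |m| = 1 := by
  by_contra! h
  have hn : 2 ≤ |n| := by
    have : |n| ≠ 0 := by rintro hn; simp [abs_eq_zero.mp hn] at hpos
    have := abs_nonneg n
    omega
  have hm : 2 ≤ |m| := by
    have : |m| ≠ 0 := by rintro hm; simp [abs_eq_zero.mp hm] at hpos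
    have := abs_nonneg m
    omega
  have : |n * m| < 4 := by rw [abs_of_pos hpos]; exact hlt
  rw [abs_mul] at this
  nlinarith

lemma sRefl_neg (α v : V) : sRefl α (-v) = -sRefl α v := by
  simp only [sRefl, inner_neg_left]
  module

lemma sRefl_neg_root (α v : V) : sRefl (-α) v = sRefl α v := by
  simp only [sRefl, inner_neg_right, inner_neg_left, neg_neg]
  module

lemma sRefl_self {α : V} (h : ⟪α, α⟫_ℝ ≠ 0) : sRefl α α = -α := by
  rw [sRefl, mul_div_assoc, div_self h]
  module

lemma inner_sRefl (α v w : V) :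
    ⟪sRefl α v, w⟫_ℝ = ⟪v, w⟫_ℝ - 2 * ⟪v, α⟫_ℝ / ⟪α, α⟫_ℝ * ⟪α, w⟫_ℝ := by
  simp [sRefl, inner_sub_left, real_inner_smul_left]

lemma sRefl_sRefl {α : V} (h : ⟪α, α⟫_ℝ ≠ 0) (v : V) : sRefl α (sRefl α v) = v := by
  have hcoeff : 2 * ⟪sRefl α v, α⟫_ℝ / ⟪α, α⟫_ℝ = -(2 * ⟪v, α⟫_ℝ / ⟪α, α⟫_ℝ) := by
    rw [inner_sRefl]
    field_simp
    ring
  rw [sRefl, hcoeff, sRefl]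
  module

lemma sRefl_comm {α α' : V} (h : ⟪α, α'⟫_ℝ = 0) (v : V) :
    sRefl α (sRefl α' v) = sRefl α' (sRefl α v) := by
  have h' : ⟪α', α⟫_ℝ = 0 := by rwa [real_inner_comm]
  simp only [sRefl, inner_sub_left, real_inner_smul_left, h, h', mul_zero, sub_zero]
  module

lemma SRefl_neg (B : Finset V) (v : V) : SRefl B (-v) = -SRefl B v := by
  simp only [SRefl, inner_neg_left, mul_neg, neg_div, neg_smul, Finset.sum_neg_distrib]
  abel

lemma SRefl_SRefl [DecidableEq V] {B C : Finset V} (hBC : Disjoint B C)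
    (horth : ∀ b ∈ B, ∀ c ∈ C, ⟪b, c⟫_ℝ = 0) (v : V) :
    SRefl B (SRefl C v) = SRefl (B ∪ C) v := by
  have hinner : ∀ b ∈ B, ⟪SRefl C v, b⟫_ℝ = ⟪v, b⟫_ℝ := fun b hb => by
    rw [SRefl, inner_sub_left, sum_inner,
      Finset.sum_eq_zero fun c hc => by
        rw [real_inner_smul_left, real_inner_comm b c, horth b hb c hc, mul_zero], sub_zero]
  rw [SRefl, Finset.sum_congr rfl fun b hb => by rw [hinner b hb], SRefl, SRefl,
    Finset.sum_union hBC]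
  abel

lemma SRefl_insert [DecidableEq V] {a : V} {s : Finset V} (ha : a ∉ s)
    (horth : ∀ b ∈ s, ⟪b, a⟫_ℝ = 0) (v : V) :
    SRefl (insert a s) v = SRefl s (sRefl a v) := by
  have hsingle : SRefl {a} v = sRefl a v := by simp [SRefl, sRefl]
  rw [← hsingle, SRefl_SRefl (Finset.disjoint_singleton_right.mpr ha)
    (fun b hb c hc => by rw [Finset.mem_singleton.mp hc]; exact horth b hb),
    Finset.union_comm, ← Finset.insert_eq]

namespace IsRootSystem

variable {R : Set V}

lemma inner_self_ne_zero (hR : IsRootSystem R) {α : V} (hα : α ∈ R) : ⟪α, α⟫_ℝ ≠ 0 :=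
  _root_.inner_self_ne_zero.mpr (hR.ne_zero α hα)

lemma neg_mem (hR : IsRootSystem R) {α : V} (hα : α ∈ R) : -α ∈ R := by
  simpa only [sRefl_self (hR.inner_self_ne_zero hα)] using hR.refl_mem α hα α hα

lemma stronglyOrthogonal_symm (hR : IsRootSystem R) {α β : V} (h : StronglyOrthogonal R α β) :
    StronglyOrthogonal R β α :=
  ⟨by rw [add_comm]; exact h.1, fun hmem => h.2 (by simpa using hR.neg_mem hmem)⟩

lemma not_stronglyOrthogonal_of_abs_cartan_eq_one (hR : IsRootSystem R) {α β : V} (hα : α ∈ R)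
    (hβ : β ∈ R) (h : |2 * ⟪β, α⟫_ℝ / ⟪α, α⟫_ℝ| = 1) : ¬StronglyOrthogonal R α β := by
  intro hso
  have hmem := hR.refl_mem α hα β hβ
  rcases (abs_eq zero_le_one).mp h with h | h <;> rw [sRefl, h] at hmem
  · exact hso.2 (by simpa using hR.neg_mem hmem)
  · exact hso.1 (by simpa [add_comm] using hmem)

lemma inner_eq_zero_of_stronglyOrthogonal (hR : IsRootSystem R) {α β : V} (hα : α ∈ R)
    (hβ : β ∈ R) (hso : StronglyOrthogonal R α β) (hne : β ≠ α) (hne' : β ≠ -α) :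
    ⟪α, β⟫_ℝ = 0 := by
  by_contra hαβ
  have hα0 := hR.ne_zero α hα
  have hαα : 0 < ⟪α, α⟫_ℝ := real_inner_self_pos.mpr hα0
  have hββ : 0 < ⟪β, β⟫_ℝ := real_inner_self_pos.mpr (hR.ne_zero β hβ)
  have hprop : ∀ r : ℝ, β ≠ r • α := by
    rintro r rfl
    rcases hR.reduced α hα r hβ with rfl | rfl <;> simp at hne hne'
  -- The Cartan integers `n, m` satisfy `0 < n m < 4` by strict Cauchy–Schwarz, so one is `±1`.
  obtain ⟨n, hn⟩ := hR.integral α hα β hβ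
  obtain ⟨m, hm⟩ := hR.integral β hβ α hα
  have hnm : ((n * m : ℤ) : ℝ) = 4 * (⟪α, β⟫_ℝ * ⟪α, β⟫_ℝ) / (⟪α, α⟫_ℝ * ⟪β, β⟫_ℝ) := by
    rw [Int.cast_mul, ← hn, ← hm, real_inner_comm]
    field_simp
    ring
  have hpos : 0 < n * m := by
    have : (0 : ℝ) < n * m := by
      rw [← Int.cast_mul, hnm]
      have := mul_self_pos.mpr hαβ
      positivity
    exact_mod_cast this
  have hlt : n * m < 4 := by
    have : ((n * m : ℤ) : ℝ) < 4 := by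
      rw [hnm, div_lt_iff₀ (by positivity)]
      linarith [real_inner_mul_inner_self_lt hα0 hprop]
    exact_mod_cast this
  rcases Int.abs_eq_one_or_abs_eq_one_of_mul_pos_of_mul_lt_four hpos hlt with h | h
  · exact hR.not_stronglyOrthogonal_of_abs_cartan_eq_one hα hβ (by rw [hn]; exact_mod_cast h) hso
  · exact hR.not_stronglyOrthogonal_of_abs_cartan_eq_one hβ hα (by rw [hm]; exact_mod_cast h)
      (hR.stronglyOrthogonal_symm hso)

end IsRootSystem

namespace PropSharp

variable {R P A : Set V}

lemma neg_notMem (hR : IsRootSystem R) (hP : IsPositiveSystem R P) (hAR : A ⊆ R)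
    (hsharp : PropSharp P A) {α : V} (hα : α ∈ A) : -α ∉ A := by
  have key : ∀ γ ∈ A, γ ∈ P → -γ ∉ A := by
    intro γ hγA hγP hγ'
    have hγγ := hR.inner_self_ne_zero (hAR hγA)
    have hne : γ ≠ -γ := fun h => hR.ne_zero γ (hAR hγA) <| by
      have h2 : (2 : ℝ) • γ = 0 := by rw [two_smul]; nth_rewrite 2 [h]; exact add_neg_cancel γ
      simpa using h2
    have hsγ := hsharp γ hγA (-γ) hγ' hne γ hγP (by rwa [sRefl_self hγγ, neg_neg])
    rw [sRefl_neg_root, sRefl_self hγγ] at hsγ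
    exact hP.not_both γ hγP hsγ
  intro hα'
  rcases hP.mem_or_neg_mem α (hAR hα) with h | h
  · exact key α hα h hα'
  · exact key (-α) hα' h (by rwa [neg_neg])

lemma pairwise_inner_eq_zero (hR : IsRootSystem R) (hP : IsPositiveSystem R P)
    (hA : IsSOS R A) (hsharp : PropSharp P A) : A.Pairwise fun α β => ⟪α, β⟫_ℝ = 0 :=
  fun _ hα _ hβ hne => hR.inner_eq_zero_of_stronglyOrthogonal (hA.1 hα) (hA.1 hβ)
    (hA.2 hα hβ hne) hne.symm fun h => hsharp.neg_notMem hR hP hA.1 hα (h ▸ hβ)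

lemma sRefl_sRefl_mem (hR : IsRootSystem R) (hP : IsPositiveSystem R P) (hA : IsSOS R A)
    (hsharp : PropSharp P A) {α α' β : V} (hα : α ∈ A) (hα' : α' ∈ A) (hne : α ≠ α')
    (hβ : β ∈ P) (h : sRefl α β ∈ P) (h' : sRefl α' β ∈ P) : sRefl α (sRefl α' β) ∈ P := by
  have hαR := hA.1 hα
  have hmem : sRefl α (sRefl α' β) ∈ R :=
    hR.refl_mem α hαR _ (hR.refl_mem α' (hA.1 hα') β (hP.subset hβ))
  refine (hP.mem_or_neg_mem _ hmem).resolve_right fun hneg => ?_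
  have hsharp' := hsharp α hα α' hα' hne _ hneg
    (by rwa [sRefl_neg, sRefl_sRefl (hR.inner_self_ne_zero hαR), neg_neg])
  rw [sRefl_neg, sRefl_comm (hsharp.pairwise_inner_eq_zero hR hP hA hα hα' hne),
    sRefl_sRefl (hR.inner_self_ne_zero (hA.1 hα'))] at hsharp'
  exact hP.not_both _ h hsharp'

lemma SRefl_mem_of_forall_sRefl_mem (hR : IsRootSystem R) (hP : IsPositiveSystem R P)
    (hA : IsSOS R A) (hsharp : PropSharp P A) {B : Finset V} (hB : ↑B ⊆ A) {β : V}
    (hβ : β ∈ P) (h : ∀ α ∈ B, sRefl α β ∈ P) : SRefl B β ∈ P := by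
  classical
  induction B using Finset.induction_on generalizing β with
  | empty => simpa [SRefl] using hβ
  | insert a s ha ih =>
    have haA : a ∈ A := hB (Finset.mem_insert_self a s)
    have hsA : ↑s ⊆ A := fun b hb => hB (Finset.mem_insert_of_mem hb)
    have hne : ∀ b ∈ s, b ≠ a := fun b hb hba => ha (hba ▸ hb)
    rw [SRefl_insert ha fun b hb =>
      hsharp.pairwise_inner_eq_zero hR hP hA (hsA hb) haA (hne b hb)]
    exact ih hsA (h a (Finset.mem_insert_self a s)) fun b hb =>
      hsharp.sRefl_sRefl_mem hR hP hA (hsA hb) haA (hne b hb) hβ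
        (h b (Finset.mem_insert_of_mem hb)) (h a (Finset.mem_insert_self a s))

lemma neg_SRefl_mem_of_neg_sRefl_mem (hR : IsRootSystem R) (hP : IsPositiveSystem R P)
    (hA : IsSOS R A) (hsharp : PropSharp P A) {B : Finset V} (hB : ↑B ⊆ A) {α₀ β : V}
    (hα₀ : α₀ ∈ B) (hβ : β ∈ P) (hneg : -sRefl α₀ β ∈ P) : -SRefl B β ∈ P := by
  classical
  have hα₀A : α₀ ∈ A := hB hα₀
  have hβ' : -sRefl α₀ (-sRefl α₀ β) ∈ P := by
    rwa [sRefl_neg, sRefl_sRefl (hR.inner_self_ne_zero (hA.1 hα₀A)), neg_neg]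
  have herase : ↑(B.erase α₀) ⊆ A := fun b hb => hB (Finset.mem_of_mem_erase hb)
  rw [← Finset.insert_erase hα₀, SRefl_insert (Finset.notMem_erase α₀ B) fun b hb =>
      hsharp.pairwise_inner_eq_zero hR hP hA (herase hb) hα₀A (Finset.ne_of_mem_erase hb),
    ← neg_neg (sRefl α₀ β), SRefl_neg, neg_neg]
  exact hsharp.SRefl_mem_of_forall_sRefl_mem hR hP hA herase hneg fun α hα =>
    hsharp α₀ hα₀A α (herase hα) (Finset.ne_of_mem_erase hα).symm _ hneg hβ'

end PropSharp

/-- Property `#` implies property `##`: for disjoint subsets `A₁, A₂ ⊆ A` and `β > 0`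
with `S_{A₁}(β) < 0`, one has `S_{A₂}(β) > 0` and `S_{A₁}S_{A₂}(β) < 0`. -/
theorem statement5 (R P : Set V) (A : Finset V) (hR : IsRootSystem R)
    (hP : IsPositiveSystem R P) (hA : IsSOS R ↑A) (hsharp : PropSharp P ↑A) :
    ∀ A₁ ⊆ A, ∀ A₂ ⊆ A, Disjoint A₁ A₂ → ∀ β ∈ P, -(SRefl A₁ β) ∈ P →
      SRefl A₂ β ∈ P ∧ -(SRefl A₁ (SRefl A₂ β)) ∈ P := by
  classical
  intro A₁ hA₁ A₂ hA₂ hdisj β hβ hneg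
  have hA₁' : (↑A₁ : Set V) ⊆ ↑A := Finset.coe_subset.mpr hA₁
  have hA₂' : (↑A₂ : Set V) ⊆ ↑A := Finset.coe_subset.mpr hA₂
  obtain ⟨α₀, hα₀, hα₀neg⟩ : ∃ α₀ ∈ A₁, -sRefl α₀ β ∈ P := by
    by_contra! hpos
    refine hP.not_both _ (hsharp.SRefl_mem_of_forall_sRefl_mem hR hP hA hA₁' hβ fun α hα => ?_) hneg
    exact (hP.mem_or_neg_mem _ (hR.refl_mem α (hA.1 (hA₁' hα)) β (hP.subset hβ))).resolve_right
      (hpos α hα)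
  have hA₂pos : SRefl A₂ β ∈ P :=
    hsharp.SRefl_mem_of_forall_sRefl_mem hR hP hA hA₂' hβ fun α hα =>
      hsharp α₀ (hA₁' hα₀) α (hA₂' hα) (fun h => Finset.disjoint_left.mp hdisj hα₀ (h ▸ hα)) β
        hβ hα₀neg
  have horth : ∀ a ∈ A₁, ∀ b ∈ A₂, ⟪a, b⟫_ℝ = 0 := fun a ha b hb =>
    hsharp.pairwise_inner_eq_zero hR hP hA (hA₁' ha) (hA₂' hb)
      fun h => Finset.disjoint_left.mp hdisj ha (h ▸ hb)
  refine ⟨hA₂pos, ?_⟩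
  rw [SRefl_SRefl hdisj horth]
  exact hsharp.neg_SRefl_mem_of_neg_sRefl_mem hR hP hA
    (Finset.coe_subset.mpr (Finset.union_subset hA₁ hA₂)) (Finset.mem_union_left A₂ hα₀) hβ
    hα₀neg
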